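/- arXiv:2304.04497 — 3 statements merged into one kernel-verified Lean document; each statement's English description precedes it below -/
import Mathlib

section
/- (Theorem 4.1) Let K ≥ 2 be the number of communities of a network generated by the affiliation graph model with intra-community edge probability p > 0, with community sizes N_{C_1},…,N_{C_K} (natural numbers), minimum size N_min and maximum size N_max. Suppose there is a real ε > 0 with N_max − N_min ≤ ε and ε ≤ (N_min − 1)/K − 1. If node u belongs to a set S of M communities and node v belongs to a set S′ of M′ communities with M′ < M (so M′ < M ≤ K), then the expected degree of u is at least the expected degree of v; that is, Σ_{i∈S}(N_{C_i} − 1)·p ≥ Σ_{j∈S′}(N_{C_j} − 1)·p. -/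
/-!
Every community contributes between `(N_min - 1) p` and `(N_max - 1) p` to an expected degree,
so `v`'s expected degree is at most `M' (N_max - 1) p` and `u`'s at least `M (N_min - 1) p ≥
(M' + 1) (N_min - 1) p`. The hypothesis on `ε` says that the total spread `K (N_max - N_min) p`
of the `M' < K` contributions to `v` is at most one minimal contribution `(N_min - 1) p`.
-/

theorem Finset.sum_le_sum_of_card_lt_of_spread_le {ι R : Type*} [Field R] [LinearOrder R]
    [IsStrictOrderedRing R] {s t : Finset ι} {f : ι → R} {lo hi : R} {n : ℕ}
    (hlo : ∀ i, lo ≤ f i) (hhi : ∀ i, f i ≤ hi) (hst : t.card < s.card) (htn : t.card ≤ n)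
    (hspread : n * (hi - lo) ≤ lo) : ∑ i ∈ t, f i ≤ ∑ i ∈ s, f i := by
  obtain ⟨i, -⟩ : s.Nonempty := Finset.card_pos.mp (t.card.zero_le.trans_lt hst)
  have hle : lo ≤ hi := (hlo i).trans (hhi i)
  have hlo_nonneg : 0 ≤ lo := le_trans (by positivity [sub_nonneg.2 hle]) hspread
  have hcard : (t.card : R) + 1 ≤ s.card := by exact_mod_cast hst
  have htn' : (t.card : R) * (hi - lo) ≤ n * (hi - lo) :=
    mul_le_mul_of_nonneg_right (by exact_mod_cast htn) (sub_nonneg.2 hle)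
  calc ∑ i ∈ t, f i ≤ t.card * hi := by
        simpa using Finset.sum_le_card_nsmul t f hi fun i _ ↦ hhi i
    _ ≤ (t.card + 1) * lo := by linarith
    _ ≤ s.card * lo := mul_le_mul_of_nonneg_right hcard hlo_nonneg
    _ ≤ ∑ i ∈ s, f i := by simpa using Finset.card_nsmul_le_sum s f lo fun i _ ↦ hlo i

theorem agm_expected_degree_mono_general
    (K : ℕ) (p : ℝ) (hp : 0 < p)
    (NC : Fin K → ℕ) (Nmin Nmax : ℕ)
    (hNmin : Nmin = sInf (Set.range NC))
    (hNmax : Nmax = sSup (Set.range NC))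
    (ε : ℝ)
    (hdiff : (Nmax : ℝ) - (Nmin : ℝ) ≤ ε)
    (hεK : ε ≤ ((Nmin : ℝ) - 1) / (K : ℝ) - 1)
    (S S' : Finset (Fin K)) (M M' : ℕ)
    (hS : S.card = M) (hS' : S'.card = M') (hMM : M' < M) :
    ∑ j ∈ S', ((NC j : ℝ) - 1) * p ≤ ∑ i ∈ S, ((NC i : ℝ) - 1) * p := by
  subst hS hS'
  have hS'K : S'.card ≤ K := S'.card_le_univ.trans_eq (Fintype.card_fin K)
  have hlow (i : Fin K) : Nmin ≤ NC i := hNmin ▸ Nat.sInf_le ⟨i, rfl⟩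
  have hhigh (i : Fin K) : NC i ≤ Nmax := hNmax ▸ le_csSup (Set.finite_range NC).bddAbove ⟨i, rfl⟩
  have hspread : (K : ℝ) * (Nmax - Nmin) ≤ Nmin - 1 := by
    have hK : (0 : ℝ) < K := by
      exact_mod_cast (S'.card.zero_le.trans_lt hMM).trans_le
        (S.card_le_univ.trans_eq (Fintype.card_fin K))
    rw [le_sub_iff_add_le, le_div_iff₀ hK] at hεK
    linarith [mul_le_mul_of_nonneg_left hdiff hK.le]
  refine Finset.sum_le_sum_of_card_lt_of_spread_le (lo := (Nmin - 1) * p) (hi := (Nmax - 1) * p)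
    (fun i ↦ ?_) (fun i ↦ ?_) hMM hS'K ?_
  · gcongr; exact hlow i
  · gcongr; exact hhigh i
  · calc (K : ℝ) * ((Nmax - 1) * p - (Nmin - 1) * p) = K * (Nmax - Nmin) * p := by ring
      _ ≤ (Nmin - 1) * p := by gcongr

/-- **Theorem 4.1.** In an AGM network with `K ≥ 2` communities of sizes `NC i`,
intra-community edge probability `p > 0`, minimum size `Nmin`, maximum size `Nmax`,
and `ε > 0` with `Nmax − Nmin ≤ ε ≤ (Nmin − 1)/K − 1`: if node `u` belongs to a set
`S` of `M` communities and node `v` to a set `S'` of `M'` communities with `M' < M`,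
then the expected degree of `u` is at least that of `v`. -/
theorem agm_expected_degree_mono
    (K : ℕ) (hK : 2 ≤ K) (p : ℝ) (hp : 0 < p)
    (NC : Fin K → ℕ) (Nmin Nmax : ℕ)
    (hNmin : Nmin = sInf (Set.range NC))
    (hNmax : Nmax = sSup (Set.range NC))
    (ε : ℝ) (hε : 0 < ε)
    (hdiff : (Nmax : ℝ) - (Nmin : ℝ) ≤ ε)
    (hεK : ε ≤ ((Nmin : ℝ) - 1) / (K : ℝ) - 1)
    (S S' : Finset (Fin K)) (M M' : ℕ)
    (hS : S.card = M) (hS' : S'.card = M') (hMM : M' < M) :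
    ∑ j ∈ S', ((NC j : ℝ) - 1) * p ≤ ∑ i ∈ S, ((NC i : ℝ) - 1) * p :=
  agm_expected_degree_mono_general K p hp NC Nmin Nmax hNmin hNmax ε hdiff hεK S S' M M' hS hS' hMM
end

section
/- (Key inequality in the proof of Theorem 4.1) Let K ≥ 2 be a natural number, let M and M′ be natural numbers with M′ < M ≤ K, and let N_min, N_max ≥ 1 and ε > 0 be real numbers with N_max ≤ N_min + ε and ε ≤ (N_min − 1)/K − 1. Then M·(N_min − 1) ≥ M′·(N_max − 1). -/
theorem Nat.cast_add_cast_div_le_of_lt_of_le {m n k : ℕ} (hmn : m < n) (hnk : n ≤ k) :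
    (m : ℝ) + m / k ≤ n := by
  have hdiv : (m : ℝ) / k ≤ 1 :=
    div_le_one_of_le₀ (by exact_mod_cast (hmn.trans_le hnk).le) k.cast_nonneg
  have hsucc : (m : ℝ) + 1 ≤ n := by exact_mod_cast hmn
  linarith

theorem Nat.cast_mul_add_div_le_of_lt_of_le {m n k : ℕ} {a : ℝ} (ha : 0 ≤ a) (hmn : m < n)
    (hnk : n ≤ k) : m * (a + a / k) ≤ n * a :=
  calc (m : ℝ) * (a + a / k) = (m + m / k) * a := by ring
    _ ≤ n * a := mul_le_mul_of_nonneg_right (Nat.cast_add_cast_div_le_of_lt_of_le hmn hnk) ha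

theorem key_inequality_thm41_general
    (K M M' : ℕ) (hM'M : M' < M) (hMK : M ≤ K)
    (Nmin Nmax ε : ℝ) (hNmin : 1 ≤ Nmin)
    (hdiff : Nmax ≤ Nmin + ε)
    (hεK : ε ≤ (Nmin - 1) / (K : ℝ) - 1) :
    (M' : ℝ) * (Nmax - 1) ≤ (M : ℝ) * (Nmin - 1) := by
  have hNmax : Nmax - 1 ≤ (Nmin - 1) + (Nmin - 1) / K := by linarith
  calc (M' : ℝ) * (Nmax - 1) ≤ M' * ((Nmin - 1) + (Nmin - 1) / K) := by gcongr
    _ ≤ M * (Nmin - 1) := Nat.cast_mul_add_div_le_of_lt_of_le (by linarith) hM'M hMK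

/-- **Key inequality in the proof of Theorem 4.1.** For `K ≥ 2`, `M' < M ≤ K`,
`Nmin, Nmax ≥ 1`, `ε > 0` with `Nmax ≤ Nmin + ε` and `ε ≤ (Nmin − 1)/K − 1`:
`M·(Nmin − 1) ≥ M'·(Nmax − 1)`. -/
theorem key_inequality_thm41
    (K M M' : ℕ) (hK : 2 ≤ K) (hM'M : M' < M) (hMK : M ≤ K)
    (Nmin Nmax ε : ℝ) (hNmin : 1 ≤ Nmin) (hNmax : 1 ≤ Nmax)
    (hε : 0 < ε) (hdiff : Nmax ≤ Nmin + ε)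
    (hεK : ε ≤ (Nmin - 1) / (K : ℝ) - 1) :
    (M' : ℝ) * (Nmax - 1) ≤ (M : ℝ) * (Nmin - 1) :=
  key_inequality_thm41_general K M M' hM'M hMK Nmin Nmax ε hNmin hdiff hεK
end

section
/- (Theorem 4.2) Let K ≥ 2 and partition the N > 0 nodes into K subsets according to the number of communities they belong to, with subset sizes n_1,…,n_K ≥ 0 summing to N, and let e_i ≥ 0 denote the average degree of nodes in subset i. Assume n_1 ≤ (2/3)·N and e_1·n_1 ≥ Σ_{i=2}^K e_i·n_i, and assume e_1 ≤ (N_max − 1)·p (a node in exactly one community has expected degree at most (N_max − 1)·p). Let the community sizes satisfy 1 ≤ N_min ≤ N_{C_i} ≤ N_max for all communities, with N_max ≤ N_min + ε for some ε > 0 satisfying ε ≤ (N_min − 1)/K − 1, and let p > 0. Then for any node u belonging to M ≥ 2 communities C_1,…,C_M, the network-average expected degree is at most the expected degree of u: (Σ_{i=1}^K e_i·n_i)/N ≤ Σ_{i=1}^M (N_{C_i} − 1)·p. -/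
/-!
Since the nodes in a single community carry at least half of the total degree and make up at
most two thirds of the nodes, the average degree is at most `4/3 · e 1 ≤ 4/3 · (Nmax - 1) p`.
The bound on `ε` forces `Nmax - 1 ≤ 3/2 · (Nmin - 1)` once `K ≥ 2`, so the average is at most
`2 (Nmin - 1) p`, which the `M ≥ 2` communities of `u` already exceed.
-/

open Finset

lemma sum_Icc_le_two_mul_of_sum_tail_le {K : ℕ} (hK : 1 ≤ K) {f : ℕ → ℝ}
    (h : ∑ i ∈ Icc 2 K, f i ≤ f 1) : ∑ i ∈ Icc 1 K, f i ≤ 2 * f 1 := by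
  rw [Icc_eq_cons_Ioc hK, sum_cons, ← Icc_add_one_left_eq_Ioc, one_add_one_eq_two]
  linarith

lemma div_le_four_thirds_mul_of_le_two_mul {S N e m : ℝ} (hN : 0 < N) (he : 0 ≤ e)
    (hm : m ≤ 2 / 3 * N) (hS : S ≤ 2 * (e * m)) : S / N ≤ 4 / 3 * e := by
  rw [div_le_iff₀ hN]
  calc S ≤ 2 * (e * m) := hS
    _ ≤ 2 * (e * (2 / 3 * N)) := by gcongr
    _ = 4 / 3 * e * N := by ring

lemma sub_one_le_three_halves_mul_of_le_add {K Nmin Nmax ε : ℝ} (hK : 2 ≤ K) (hNmin : 1 ≤ Nmin)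
    (hdiff : Nmax ≤ Nmin + ε) (hεK : ε ≤ (Nmin - 1) / K - 1) :
    Nmax - 1 ≤ 3 / 2 * (Nmin - 1) := by
  have : (Nmin - 1) / K ≤ (Nmin - 1) / 2 := by gcongr
  linarith

lemma two_mul_le_sum_Icc_of_le {M : ℕ} (hM : 2 ≤ M) {c : ℝ} (hc : 0 ≤ c) {g : ℕ → ℝ}
    (hg : ∀ i ∈ Icc 1 M, c ≤ g i) : 2 * c ≤ ∑ i ∈ Icc 1 M, g i := by
  calc 2 * c ≤ M * c := by gcongr; exact_mod_cast hM
    _ = #(Icc 1 M) • c := by simp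
    _ ≤ ∑ i ∈ Icc 1 M, g i := card_nsmul_le_sum _ _ _ hg

theorem thm42_average_le_overlap_degree_general
    (K : ℕ) (hK : 2 ≤ K) (N : ℝ) (hN : 0 < N)
    (n e : ℕ → ℝ)
    (he : ∀ i ∈ Finset.Icc 1 K, 0 ≤ e i)
    (h1 : n 1 ≤ 2 / 3 * N)
    (h2 : ∑ i ∈ Finset.Icc 2 K, e i * n i ≤ e 1 * n 1)
    (p : ℝ) (hp : 0 < p)
    (Nmin Nmax ε : ℝ) (hNmin : 1 ≤ Nmin)
    (hdiff : Nmax ≤ Nmin + ε)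
    (hεK : ε ≤ (Nmin - 1) / (K : ℝ) - 1)
    (h3 : e 1 ≤ (Nmax - 1) * p)
    (M : ℕ) (hM : 2 ≤ M)
    (NC : ℕ → ℝ)
    (hNC : ∀ i ∈ Finset.Icc 1 M, Nmin ≤ NC i ∧ NC i ≤ Nmax) :
    (∑ i ∈ Finset.Icc 1 K, e i * n i) / N ≤ ∑ i ∈ Finset.Icc 1 M, (NC i - 1) * p := by
  have hsize : Nmax - 1 ≤ 3 / 2 * (Nmin - 1) :=
    sub_one_le_three_halves_mul_of_le_add (by exact_mod_cast hK) hNmin hdiff hεK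
  calc (∑ i ∈ Icc 1 K, e i * n i) / N ≤ 4 / 3 * e 1 :=
        div_le_four_thirds_mul_of_le_two_mul hN (he 1 (mem_Icc.2 ⟨le_rfl, by omega⟩)) h1
          (sum_Icc_le_two_mul_of_sum_tail_le (by omega) h2)
    _ ≤ 4 / 3 * (3 / 2 * (Nmin - 1) * p) := by grw [h3, hsize]
    _ = 2 * ((Nmin - 1) * p) := by ring
    _ ≤ ∑ i ∈ Icc 1 M, (NC i - 1) * p :=
        two_mul_le_sum_Icc_of_le hM (mul_nonneg (by linarith) hp.le) fun i hi => by grw [(hNC i hi).1]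

/-- **Theorem 4.2.** Partition the `N > 0` nodes of an AGM network with `K ≥ 2`
communities into `K` subsets according to the number of communities they belong to,
with subset sizes `n i ≥ 0` summing to `N` and average degrees `e i ≥ 0` (`i = 1, …, K`).
Assume `n 1 ≤ (2/3)·N`, `e 1 · n 1 ≥ Σ_{i=2}^K e i · n i`, and `e 1 ≤ (Nmax − 1)·p`.
Let the community sizes of the `M ≥ 2` communities of node `u` satisfy
`1 ≤ Nmin ≤ NC i ≤ Nmax`, with `Nmax ≤ Nmin + ε` for some `ε > 0` with
`ε ≤ (Nmin − 1)/K − 1`, and let `p > 0`. Then the network-average expected degree is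
at most the expected degree of `u`. -/
theorem thm42_average_le_overlap_degree
    (K : ℕ) (hK : 2 ≤ K) (N : ℝ) (hN : 0 < N)
    (n e : ℕ → ℝ)
    (hn : ∀ i ∈ Finset.Icc 1 K, 0 ≤ n i)
    (he : ∀ i ∈ Finset.Icc 1 K, 0 ≤ e i)
    (hsum : ∑ i ∈ Finset.Icc 1 K, n i = N)
    (h1 : n 1 ≤ 2 / 3 * N)
    (h2 : ∑ i ∈ Finset.Icc 2 K, e i * n i ≤ e 1 * n 1)
    (p : ℝ) (hp : 0 < p)
    (Nmin Nmax ε : ℝ) (hNmin : 1 ≤ Nmin) (hε : 0 < ε)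
    (hdiff : Nmax ≤ Nmin + ε)
    (hεK : ε ≤ (Nmin - 1) / (K : ℝ) - 1)
    (h3 : e 1 ≤ (Nmax - 1) * p)
    (M : ℕ) (hM : 2 ≤ M)
    (NC : ℕ → ℝ)
    (hNC : ∀ i ∈ Finset.Icc 1 M, Nmin ≤ NC i ∧ NC i ≤ Nmax) :
    (∑ i ∈ Finset.Icc 1 K, e i * n i) / N ≤ ∑ i ∈ Finset.Icc 1 M, (NC i - 1) * p :=
  thm42_average_le_overlap_degree_general K hK N hN n e he h1 h2 p hp Nmin Nmax ε hNmin hdiff hεK h3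
    M hM NC hNC
end
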